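/- Let L be a finite graded atomic lattice with atom set A and let f : B(A) → L be the canonical map sending a subset S ⊆ A to its join ⋁ S in L. Then for every x ∈ L, μ_L(⊥, x) = ∑_{S ∈ f⁻¹(x)} (-1)^{|S|}. -/
import Mathlib


open scoped Classical

/-- **Möbius function via the Boolean cover.**
Let `L` be a finite graded atomic lattice with atom set `A`, and let
`f : B(A) → L` be the canonical map sending a finite set `S` of atoms to its join `⋁S`
(with `f ∅ = ⊥`).  If `mu x` denotes the Möbius function `μ_L(⊥, x)` then for every
`x ∈ L` we have `μ_L(⊥, x) = ∑_{S ∈ f⁻¹(x)} (-1)^{|S|}`. -/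
theorem moebius_boolean_cover {L : Type} [Fintype L] [Lattice L] [OrderBot L]
    [GradeOrder ℕ L]
    (atomic : ∀ x : L, ∃ S : Finset {a : L // IsAtom a}, S.sup Subtype.val = x)
    (mu : L → ℤ)
    (hmu_bot : mu ⊥ = 1)
    (hmu_rec : ∀ x : L, x ≠ ⊥ → mu x = - ∑ z ∈ Finset.univ.filter (· < x), mu z) :
    ∀ x : L, mu x =
      ∑ S ∈ Finset.univ.filter
          (fun S : Finset {a : L // IsAtom a} => S.sup Subtype.val = x),
        (-1 : ℤ) ^ S.card := by
  set g : L → ℤ := fun x =>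
    ∑ S ∈ Finset.univ.filter
        (fun S : Finset {a : L // IsAtom a} => S.sup Subtype.val = x),
      (-1 : ℤ) ^ S.card with hg
  intro x
  induction x using WellFoundedLT.induction with
  | _ x IH =>
  by_cases hx : x = ⊥
  · subst hx
    have hset : Finset.univ.filter
        (fun S : Finset {a : L // IsAtom a} => S.sup Subtype.val = ⊥) = {∅} := by
      ext S
      simp only [Finset.mem_filter, Finset.mem_univ, true_and, Finset.mem_singleton]
      constructor
      · intro h
        by_contra hS
        obtain ⟨a, ha⟩ := Finset.nonempty_iff_ne_empty.2 hS
        exact a.2.1 (le_bot_iff.mp (h ▸ Finset.le_sup ha))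
      · rintro rfl; simp
    rw [hmu_bot, hset]; simp
  · -- the atoms below x
    set T : Finset {a : L // IsAtom a} :=
      Finset.univ.filter (fun a : {a : L // IsAtom a} => a.val ≤ x) with hT
    have hTne : T.Nonempty := by
      obtain ⟨S, hS⟩ := atomic x
      have hSne : S.Nonempty := by
        rcases Finset.eq_empty_or_nonempty S with h | h
        · exact absurd (by simp [h] at hS; exact hS.symm) hx
        · exact h
      obtain ⟨a, ha⟩ := hSne
      exact ⟨a, by simp [hT, hS ▸ Finset.le_sup ha]⟩
    -- sum of g over z ≤ x equals sum over powerset of T, which is 0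
    have key : ∑ z ∈ Finset.univ.filter (· ≤ x), g z = 0 := by
      have h1 : ∑ z ∈ Finset.univ.filter (· ≤ x), g z
          = ∑ S ∈ Finset.univ.filter
              (fun S : Finset {a : L // IsAtom a} => S.sup Subtype.val ≤ x),
            (-1 : ℤ) ^ S.card := by
        rw [← Finset.sum_fiberwise_of_maps_to (g := fun S : Finset {a : L // IsAtom a} => S.sup Subtype.val)
          (t := Finset.univ.filter (· ≤ x))
          (fun S hS => by
            simp only [Finset.mem_filter, Finset.mem_univ, true_and] at hS ⊢
            exact hS)]
        refine Finset.sum_congr rfl fun z hz => ?_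
        simp only [Finset.mem_filter, Finset.mem_univ, true_and] at hz
        rw [hg]
        refine Finset.sum_congr ?_ fun _ _ => rfl
        ext S
        simp only [Finset.mem_filter, Finset.mem_univ, true_and]
        exact ⟨fun h => ⟨h ▸ hz, h⟩, fun h => h.2⟩
      have h2 : Finset.univ.filter
          (fun S : Finset {a : L // IsAtom a} => S.sup Subtype.val ≤ x)
          = T.powerset := by
        ext S
        simp [Finset.mem_powerset, Finset.sup_le_iff, hT, Finset.subset_iff]
      rw [h1, h2, Finset.sum_powerset_neg_one_pow_card,
        if_neg (Finset.nonempty_iff_ne_empty.mp hTne)]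
    have hsplit : Finset.univ.filter (· ≤ x)
        = insert x (Finset.univ.filter (· < x)) := by
      ext z
      simp only [Finset.mem_filter, Finset.mem_univ, true_and, Finset.mem_insert]
      constructor
      · intro h; rcases eq_or_lt_of_le h with h | h
        · exact Or.inl h
        · exact Or.inr (by simpa using h)
      · rintro (rfl | h)
        · exact le_rfl
        · exact le_of_lt (by simpa using h)
    rw [hsplit, Finset.sum_insert (by simp)] at key
    have hlt : ∑ z ∈ Finset.univ.filter (· < x), mu z
        = ∑ z ∈ Finset.univ.filter (· < x), g z := by
      refine Finset.sum_congr rfl fun z hz => ?_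
      simp only [Finset.mem_filter, Finset.mem_univ, true_and] at hz
      exact IH z hz
    rw [hmu_rec x hx, hlt]
    linarith [key]
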